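/- arXiv:2411.02675 — 5 statements merged into one kernel-verified Lean document; each statement's English description precedes it below -/
import Mathlib

section
/- Let S be a finite nonempty type with weights q : S → ℝ satisfying q s ≥ 0 and ∑ s, q s = 1, and for f : S → ℝ write E[f] = ∑ s, q s * f s. Let p : S → ℝ with 0 ≤ p s ≤ 1 be a propensity score, τ : S → ℝ a treatment-effect function, m0 : S → ℝ a baseline conditional-mean function, and assume V := E[fun s => p s * (1 - p s)] > 0. Define the joint weight P(s,w) = q s * (if w = 1 then p s else 1 - p s) on S × {0,1}, the observed outcome Y(s,w) = m0 s + τ s * (w : ℝ), and the conditional mean Ȳ(s) = m0 s + τ s * p s. Then the population residual-on-residual regression coefficient (∑ over (s,w) of P(s,w) * ((w:ℝ) - p s) * (Y(s,w) - Ȳ s)) / (∑ over (s,w) of P(s,w) * ((w:ℝ) - p s)^2) equals E[fun s => p s * (1 - p s) * τ s] / V. In particular, under treatment effect heterogeneity the partially linear model estimates the conditional-variance weighted average of treatment effects E[ω τ]/E[ω] with ω(s) = p s (1 - p s), not the average treatment effect E[τ]. -/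
/-- The population residual-on-residual (PLM) regression coefficient
equals the conditional-variance weighted average of treatment effects
`E[p(1-p)τ]/E[p(1-p)]`, not the ATE. Treatment indicators `w : Fin 2` are
coerced to `ℝ` via their value. -/
theorem plm_estimates_conditional_variance_wate
    (S : Type*) [Fintype S] [Nonempty S]
    (q : S → ℝ) (hq : ∀ s, q s ≥ 0) (hq1 : ∑ s, q s = 1)
    (p : S → ℝ) (hp0 : ∀ s, 0 ≤ p s) (hp1 : ∀ s, p s ≤ 1)
    (τ m0 : S → ℝ)
    (V : ℝ) (hV : V = ∑ s, q s * (p s * (1 - p s))) (hVpos : V > 0)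
    (P : S → Fin 2 → ℝ)
    (hP : ∀ s w, P s w = q s * (if w = 1 then p s else 1 - p s))
    (Y : S → Fin 2 → ℝ)
    (hY : ∀ s w, Y s w = m0 s + τ s * ((w : ℕ) : ℝ))
    (Ybar : S → ℝ)
    (hYbar : ∀ s, Ybar s = m0 s + τ s * p s) :
    (∑ s, ∑ w : Fin 2, P s w * (((w : ℕ) : ℝ) - p s) * (Y s w - Ybar s)) /
      (∑ s, ∑ w : Fin 2, P s w * (((w : ℕ) : ℝ) - p s) ^ 2) =
      (∑ s, q s * (p s * (1 - p s) * τ s)) / V := by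
  have hnum : (∑ s, ∑ w : Fin 2, P s w * (((w : ℕ) : ℝ) - p s) * (Y s w - Ybar s))
      = ∑ s, q s * (p s * (1 - p s) * τ s) := by
    refine Finset.sum_congr rfl fun s _ => ?_
    simp [Fin.sum_univ_two, hP, hY, hYbar]
    ring
  have hden : (∑ s, ∑ w : Fin 2, P s w * (((w : ℕ) : ℝ) - p s) ^ 2)
      = V := by
    rw [hV]
    refine Finset.sum_congr rfl fun s _ => ?_
    simp [Fin.sum_univ_two, hP]
    ring
  rw [hnum, hden]
end

section
/- Let S be a finite nonempty type with weights q : S → ℝ satisfying q s ≥ 0 and ∑ s, q s = 1, and for f : S → ℝ write E[f] = ∑ s, q s * f s and Cov(f,g) = E[fun s => f s * g s] - E[f] * E[g]. Let τ_j, τ_k, γ_j, γ_k : S → ℝ with E[γ_j] = 1 and E[γ_k] = 1, and let δ > 0. If (1) Cov(τ_j, γ_j) < -δ, (2) Cov(τ_k, γ_k) > δ, and (3) E[τ_j] - E[τ_k] < 2δ, then E[fun s => γ_j s * τ_j s] < E[fun s => γ_k s * τ_k s]; in particular if in addition E[τ_j] > E[τ_k], a rank reversal occurs. -/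
/-- Interpretable sufficient conditions for rank reversal.
If `Cov(τ_j, γ_j) < -δ`, `Cov(τ_k, γ_k) > δ`, and `E[τ_j] - E[τ_k] < 2δ`,
then `WATE_j < WATE_k`; in particular, if additionally `E[τ_j] > E[τ_k]`,
a rank reversal occurs. -/
theorem sufficient_conditions_rank_reversal
    (S : Type*) [Fintype S] [Nonempty S]
    (q : S → ℝ) (hq : ∀ s, q s ≥ 0) (hq1 : ∑ s, q s = 1)
    (τj τk γj γk : S → ℝ)
    (hγj : ∑ s, q s * γj s = 1) (hγk : ∑ s, q s * γk s = 1)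
    (δ : ℝ) (hδ : δ > 0)
    (h1 : (∑ s, q s * (τj s * γj s)) - (∑ s, q s * τj s) * (∑ s, q s * γj s) < -δ)
    (h2 : (∑ s, q s * (τk s * γk s)) - (∑ s, q s * τk s) * (∑ s, q s * γk s) > δ)
    (h3 : (∑ s, q s * τj s) - (∑ s, q s * τk s) < 2 * δ) :
    (∑ s, q s * (γj s * τj s) < ∑ s, q s * (γk s * τk s)) ∧
      ((∑ s, q s * τj s > ∑ s, q s * τk s) →
        ((∑ s, q s * τj s > ∑ s, q s * τk s) ∧
          ∑ s, q s * (γj s * τj s) < ∑ s, q s * (γk s * τk s))) := by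
  have ej : ∑ s, q s * (γj s * τj s) = ∑ s, q s * (τj s * γj s) := by
    simp [mul_comm]
  have ek : ∑ s, q s * (γk s * τk s) = ∑ s, q s * (τk s * γk s) := by
    simp [mul_comm]
  rw [hγj, mul_one] at h1
  rw [hγk, mul_one] at h2
  have key : ∑ s, q s * (γj s * τj s) < ∑ s, q s * (γk s * τk s) := by
    rw [ej, ek]; linarith
  exact ⟨key, fun h => ⟨h, key⟩⟩
end

section
/- Let S be a finite nonempty type with weights q : S → ℝ satisfying q s ≥ 0 and ∑ s, q s = 1, and for f : S → ℝ write E[f] = ∑ s, q s * f s and Cov(f,g) = E[fun s => f s * g s] - E[f] * E[g]. Let τ_j, τ_k, γ_j, γ_k : S → ℝ with E[γ_j] = 1 and E[γ_k] = 1. If a rank reversal occurs, i.e. E[τ_j] > E[τ_k] but E[fun s => γ_j s * τ_j s] < E[fun s => γ_k s * τ_k s], then Cov(τ_k, γ_k) - Cov(τ_j, γ_j) > E[τ_j] - E[τ_k] > 0; in particular Cov(τ_j, γ_j) < Cov(τ_k, γ_k), so rank reversal is impossible when Cov(τ_j, γ_j) ≥ Cov(τ_k, γ_k). -/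
/-- A rank reversal implies
`Cov(τ_k, γ_k) - Cov(τ_j, γ_j) > E[τ_j] - E[τ_k] > 0`;
in particular `Cov(τ_j, γ_j) < Cov(τ_k, γ_k)`, so rank reversal is
impossible when `Cov(τ_j, γ_j) ≥ Cov(τ_k, γ_k)`. -/
theorem rank_reversal_necessary_cov_gap
    (S : Type*) [Fintype S] [Nonempty S]
    (q : S → ℝ) (hq : ∀ s, q s ≥ 0) (hq1 : ∑ s, q s = 1)
    (τj τk γj γk : S → ℝ)
    (hγj : ∑ s, q s * γj s = 1) (hγk : ∑ s, q s * γk s = 1)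
    (hATE : ∑ s, q s * τj s > ∑ s, q s * τk s)
    (hWATE : ∑ s, q s * (γj s * τj s) < ∑ s, q s * (γk s * τk s)) :
    (((∑ s, q s * (τk s * γk s)) - (∑ s, q s * τk s) * (∑ s, q s * γk s)) -
        ((∑ s, q s * (τj s * γj s)) - (∑ s, q s * τj s) * (∑ s, q s * γj s)) >
      (∑ s, q s * τj s) - (∑ s, q s * τk s)) ∧
    ((∑ s, q s * τj s) - (∑ s, q s * τk s) > 0) ∧
    ((∑ s, q s * (τj s * γj s)) - (∑ s, q s * τj s) * (∑ s, q s * γj s) <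
      (∑ s, q s * (τk s * γk s)) - (∑ s, q s * τk s) * (∑ s, q s * γk s)) := by
  have hjk : (∑ s, q s * (τj s * γj s)) = ∑ s, q s * (γj s * τj s) := by
    simp_rw [mul_comm (τj _)]
  have hkk : (∑ s, q s * (τk s * γk s)) = ∑ s, q s * (γk s * τk s) := by
    simp_rw [mul_comm (τk _)]
  rw [hjk, hkk, hγj, hγk]
  refine ⟨by linarith, by linarith, by linarith⟩
end

section
/- Let S = Bool (two equally likely covariate strata, q s = 1/2 for each s). Define propensity scores p₁ with p₁ false = 0.01, p₁ true = 0.5 and p₂ with p₂ false = 0.5, p₂ true = 0.01, and treatment-effect functions τ₁ with τ₁ false = -3, τ₁ true = 3 and τ₂ with τ₂ false = -2, τ₂ true = 3. For g ∈ {1,2} let ATE_g = ∑ s, (1/2) * τ_g s and WATE_g = (∑ s, (1/2) * p_g s * (1 - p_g s) * τ_g s) / (∑ s, (1/2) * p_g s * (1 - p_g s)). Then ATE₁ = 0 < ATE₂ = 1/2, yet WATE₁ = 0.7203/0.2599 > 0 and WATE₂ = -0.4703/0.2599 < 0, so WATE₁ > WATE₂: the partially linear model's overlap-weighted estimands rank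 the two treatments in the opposite order to their average treatment effects. -/
/-- Concrete numerical example of a rank reversal. With two equally
likely strata (`S = Bool`), propensity scores `p₁ = (0.01, 0.5)`,
`p₂ = (0.5, 0.01)` and effects `τ₁ = (-3, 3)`, `τ₂ = (-2, 3)`, the ATEs rank
treatment 2 above treatment 1 (`0 < 1/2`) but the PLM's overlap-weighted
estimands rank them in the opposite order. -/
theorem numerical_rank_reversal_example
    (p₁ p₂ τ₁ τ₂ : Bool → ℝ)
    (hp₁f : p₁ false = 0.01) (hp₁t : p₁ true = 0.5)
    (hp₂f : p₂ false = 0.5) (hp₂t : p₂ true = 0.01)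
    (hτ₁f : τ₁ false = -3) (hτ₁t : τ₁ true = 3)
    (hτ₂f : τ₂ false = -2) (hτ₂t : τ₂ true = 3) :
    (∑ s, (1 / 2 : ℝ) * τ₁ s = 0) ∧
    (∑ s, (1 / 2 : ℝ) * τ₂ s = 1 / 2) ∧
    ((0 : ℝ) < 1 / 2) ∧
    ((∑ s, (1 / 2 : ℝ) * (p₁ s * (1 - p₁ s)) * τ₁ s) /
        (∑ s, (1 / 2 : ℝ) * (p₁ s * (1 - p₁ s))) = 0.7203 / 0.2599) ∧
    ((0.7203 : ℝ) / 0.2599 > 0) ∧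
    ((∑ s, (1 / 2 : ℝ) * (p₂ s * (1 - p₂ s)) * τ₂ s) /
        (∑ s, (1 / 2 : ℝ) * (p₂ s * (1 - p₂ s))) = -0.4703 / 0.2599) ∧
    ((-0.4703 : ℝ) / 0.2599 < 0) ∧
    ((∑ s, (1 / 2 : ℝ) * (p₁ s * (1 - p₁ s)) * τ₁ s) /
        (∑ s, (1 / 2 : ℝ) * (p₁ s * (1 - p₁ s))) >
      (∑ s, (1 / 2 : ℝ) * (p₂ s * (1 - p₂ s)) * τ₂ s) /
        (∑ s, (1 / 2 : ℝ) * (p₂ s * (1 - p₂ s)))) := by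
  simp only [Fintype.sum_bool, hp₁f, hp₁t, hp₂f, hp₂t, hτ₁f, hτ₁t, hτ₂f, hτ₂t]
  norm_num
end

section
/- Let S be a finite nonempty type with weights q : S → ℝ satisfying q s ≥ 0 and ∑ s, q s = 1, and for f : S → ℝ write E[f] = ∑ s, q s * f s and Cov(f,g) = E[fun s => f s * g s] - E[f] * E[g]. Let τ_j, τ_k : S → ℝ and let γ : S → ℝ be a common weight function with E[γ] = 1 (the two treatments have identical regression weights, as when their propensity score distributions coincide). Then E[fun s => γ s * τ_j s] - E[fun s => γ s * τ_k s] = (E[τ_j] - E[τ_k]) + Cov(fun s => τ_j s - τ_k s, γ); in particular, if Cov(fun s => τ_j s - τ_k s, γ) = 0, then E[τ_j] > E[τ_k] implies E[fun s => γ s * τ_j s] > E[fun s => γ s * τ_k s], so no rank reversal occurs. -/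
/-- With a common weight function `γ` (identical propensity
score distributions), the difference of WATEs equals the difference of ATEs
plus the covariance of the effect difference with the weights; in particular
zero covariance rules out rank reversal. -/
theorem common_weights_wate_difference
    (S : Type*) [Fintype S] [Nonempty S]
    (q : S → ℝ) (hq : ∀ s, q s ≥ 0) (hq1 : ∑ s, q s = 1)
    (τj τk γ : S → ℝ) (hγ : ∑ s, q s * γ s = 1) :
    ((∑ s, q s * (γ s * τj s)) - (∑ s, q s * (γ s * τk s)) =
      ((∑ s, q s * τj s) - (∑ s, q s * τk s)) +
        ((∑ s, q s * ((τj s - τk s) * γ s)) -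
          (∑ s, q s * (τj s - τk s)) * (∑ s, q s * γ s))) ∧
    (((∑ s, q s * ((τj s - τk s) * γ s)) -
        (∑ s, q s * (τj s - τk s)) * (∑ s, q s * γ s) = 0) →
      (∑ s, q s * τj s > ∑ s, q s * τk s) →
      ∑ s, q s * (γ s * τj s) > ∑ s, q s * (γ s * τk s)) := by
  have key : (∑ s, q s * (γ s * τj s)) - (∑ s, q s * (γ s * τk s)) =
      ((∑ s, q s * τj s) - (∑ s, q s * τk s)) +
        ((∑ s, q s * ((τj s - τk s) * γ s)) -
          (∑ s, q s * (τj s - τk s)) * (∑ s, q s * γ s)) := by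
    rw [hγ]
    simp only [mul_sub, sub_mul, Finset.sum_sub_distrib, mul_one]
    ring_nf
    congr 1 <;> exact Finset.sum_congr rfl (fun s _ => by ring)
  refine ⟨key, fun hcov hgt => ?_⟩
  have := key
  rw [hcov, add_zero] at this
  linarith
end
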